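/- Let s ≥ 2 be an integer and let g : ℝ → ℝ satisfy: for every admissible digit sequence a, g(∑_{n=0}^∞ a n / s^{n+1}) = ∑_{n=0}^∞ (−1)^{n+1} a n / s^{n+1}. Then g is continuous at every s-adic irrational point of [0,1) relative to [0,1): for every x ∈ [0,1) such that s^n · x ∉ ℤ for all n ∈ ℕ, g is ContinuousWithinAt on [0,1) at x. (Paper's Theorem 1, continuity part, for the function f₊.) -/

import Mathlib

/-!
Reflecting the digits in even positions, `d ↦ s - 1 - d`, turns the nega-`s`-adic value of a
digit sequence into its `s`-adic value minus a constant. Hence two digit sequences agreeing in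
their first `N` places have nega-`s`-adic values within `s⁻¹ ^ N` of each other. At an `s`-adic
irrational point `x` none of the numbers `s ^ n * x` is an integer, so every floor
`⌊s ^ n * y⌋` and thus the first `N` digits of `y` are locally constant around `x`.
-/

open Filter Topology Real

section NegaDigits

variable {s : ℕ} [NeZero s]

noncomputable def negaOfDigits (d : ℕ → Fin s) : ℝ :=
  ∑' n, (-1 : ℝ) ^ (n + 1) * (d n : ℕ) / (s : ℝ) ^ (n + 1)

def negaFlip (d : ℕ → Fin s) (n : ℕ) : Fin s :=
  if Even n then (d n).rev else d n

theorem negaOfDigits_eq_ofDigits_sub (d : ℕ → Fin s) :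
    negaOfDigits d = ofDigits (negaFlip d) - ofDigits (negaFlip (0 : ℕ → Fin s)) := by
  rw [ofDigits, ofDigits, ← summable_ofDigitsTerm.tsum_sub summable_ofDigitsTerm, negaOfDigits]
  congr 1 with n
  rcases Nat.even_or_odd n with hn | hn
  · have hd : (d n : ℕ) + 1 ≤ s := (d n).is_lt
    have hs : (s : ℝ) ≠ 0 := Nat.cast_ne_zero.2 (NeZero.ne s)
    simp [ofDigitsTerm, negaFlip, hn, hn.add_one.neg_one_pow, Fin.val_rev, Nat.cast_sub hd,
      Nat.cast_sub NeZero.one_le]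
    field_simp
    ring
  · simp [ofDigitsTerm, negaFlip, Nat.not_even_iff_odd.2 hn, hn.add_one.neg_one_pow,
      div_eq_mul_inv]

theorem abs_negaOfDigits_sub_negaOfDigits_le {x y : ℕ → Fin s} {n : ℕ}
    (hxy : ∀ i < n, x i = y i) : |negaOfDigits x - negaOfDigits y| ≤ ((s : ℝ) ^ n)⁻¹ := by
  rw [negaOfDigits_eq_ofDigits_sub, negaOfDigits_eq_ofDigits_sub, sub_sub_sub_cancel_right]
  exact abs_ofDigits_sub_ofDigits_le fun i hi => by simp [negaFlip, hxy i hi]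

theorem tsum_digits_div_pow {x : ℝ} (hs : 1 < s) (hx : x ∈ Set.Ico 0 1) :
    ∑' n, ((digits x s n : ℕ) : ℝ) / (s : ℝ) ^ (n + 1) = x := by
  simpa [ofDigits, ofDigitsTerm, div_eq_mul_inv] using ofDigits_digits hs hx

theorem not_eventually_digits_eq_sub_one {x : ℝ} (hs : 1 < s) (hx : x ∈ Set.Ico 0 1) :
    ¬ ∃ N, ∀ n ≥ N, (digits x s n : ℕ) = s - 1 := by
  rintro ⟨N, hN⟩
  have htail : (fun i => digits x s (i + N)) = fun _ => ⟨s - 1, Nat.sub_one_lt_of_lt hs⟩ :=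
    funext fun i => Fin.ext (hN _ (Nat.le_add_left N i))
  have hx_eq := ofDigits_eq_sum_add_ofDigits (digits x s) N
  rw [ofDigits_digits hs hx, htail, ofDigits_const_last_eq_one' hs, mul_one] at hx_eq
  have hx_int : (s : ℝ) ^ N * x = ⌊(s : ℝ) ^ N * x⌋₊ + 1 := by
    conv_lhs => rw [hx_eq]
    rw [mul_add, ofDigits_digits_sum_eq hx, mul_inv_cancel₀ (by positivity)]
  linarith [Nat.lt_floor_add_one ((s : ℝ) ^ N * x)]

theorem eventually_natFloor_eq {z : ℝ} (hz : (⌊z⌋₊ : ℝ) < z) :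
    ∀ᶠ w in 𝓝 z, ⌊w⌋₊ = ⌊z⌋₊ := by
  filter_upwards [Ioo_mem_nhds hz (Nat.lt_floor_add_one z)] with w hw
  exact (Nat.floor_eq_iff ((Nat.cast_nonneg _).trans hw.1.le)).2 ⟨hw.1.le, hw.2⟩

theorem eventually_digits_eq {x : ℝ} (hx : 0 ≤ x)
    (hirr : ∀ n : ℕ, ¬ ∃ m : ℤ, (s : ℝ) ^ n * x = m) (N : ℕ) :
    ∀ᶠ y in 𝓝 x, ∀ i < N, digits y s i = digits x s i := by
  suffices h : ∀ i, ∀ᶠ y in 𝓝 x, digits y s i = digits x s i from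
    (eventually_all_finite (Set.finite_Iio N)).2 fun i _ => h i
  intro i
  set z := x * (s : ℝ) ^ (i + 1) with hz_def
  have hz : (⌊z⌋₊ : ℝ) < z := by
    refine (Nat.floor_le (by positivity)).lt_of_ne fun h => hirr (i + 1) ⟨⌊z⌋₊, ?_⟩
    rw [mul_comm, ← hz_def]
    exact_mod_cast h.symm
  filter_upwards [((continuous_mul_const _).tendsto x).eventually (eventually_natFloor_eq hz)]
    with y hy
  simp only [digits, hy]

end NegaDigits

theorem stmt_12 (s : ℕ) (hs : 2 ≤ s) (g : ℝ → ℝ)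
    (hg : ∀ a : ℕ → ℕ, (∀ n, a n ≤ s - 1) → (¬ ∃ N, ∀ n ≥ N, a n = s - 1) →
      g (∑' n : ℕ, (a n : ℝ) / (s : ℝ) ^ (n + 1)) =
        ∑' n : ℕ, (-1 : ℝ) ^ (n + 1) * (a n : ℝ) / (s : ℝ) ^ (n + 1)) :
    ∀ x ∈ Set.Ico (0 : ℝ) 1, (∀ n : ℕ, ¬ ∃ m : ℤ, (s : ℝ) ^ n * x = (m : ℝ)) →
      ContinuousWithinAt g (Set.Ico 0 1) x := by
  intro x hx hirr
  have : NeZero s := ⟨by omega⟩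
  have hg_digits : ∀ y ∈ Set.Ico (0 : ℝ) 1, g y = negaOfDigits (digits y s) := fun y hy => by
    simpa [negaOfDigits, tsum_digits_div_pow hs hy] using hg (fun n => digits y s n)
      (fun n => Nat.le_sub_one_of_lt (digits y s n).is_lt) (not_eventually_digits_eq_sub_one hs hy)
  rw [ContinuousWithinAt, Metric.tendsto_nhds]
  intro ε hε
  obtain ⟨N, hN⟩ := exists_pow_lt_of_lt_one hε (inv_lt_one_of_one_lt₀ (Nat.one_lt_cast.2 hs))
  filter_upwards [self_mem_nhdsWithin, nhdsWithin_le_nhds (eventually_digits_eq hx.1 hirr N)]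
    with y hy hdigits
  rw [Real.dist_eq, hg_digits y hy, hg_digits x hx]
  exact (abs_negaOfDigits_sub_negaOfDigits_le hdigits).trans_lt (by rwa [← inv_pow])
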